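/- (Proposition 2) For any integer k ≥ 2, the measure on [0,1] with density ρ⁽ᵏ⁾ with respect to Lebesgue measure, where ρ⁽ᵏ⁾(x) = (2^k + 2)/3 for x ∈ [0, 2^(−k)) and ρ⁽ᵏ⁾(x) = 2/3 for x ∈ [2^(−k), 1], is an invariant probability measure for the map φ_k; that is, the pushforward of this measure under φ_k equals the measure itself. -/

import Mathlib

open MeasureTheory

/-- The infinitely piecewise linear map `φ_k` on `[0,1]`:
`φ_k(x) = 2^(1-k) (x - 1/2)` for `x ∈ [1/2, 1]`,
`φ_k(x) = 2^i (x - 2^(-i))` for `x ∈ [2^(-i), 2^(1-i))`, `i ≥ 2`, and `φ_k(0) = 0`. -/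
noncomputable def phi (k : ℕ) (x : ℝ) : ℝ :=
  if x = 0 then 0
  else if (1 : ℝ) / 2 ≤ x then (2 : ℝ) ^ ((1 : ℤ) - k) * (x - 1 / 2)
  else (2 : ℝ) ^ (-(Int.log 2 x)) * (x - (2 : ℝ) ^ (Int.log 2 x))

/-- The density `ρᵏ` for `k ≥ 2`: `(2^k + 2)/3` on `[0, 2^(-k))` and `2/3` on `[2^(-k), 1]`. -/
noncomputable def rhok (k : ℕ) (x : ℝ) : ENNReal :=
  if x < (2 : ℝ) ^ (-(k : ℤ)) then ENNReal.ofReal (((2 : ℝ) ^ k + 2) / 3)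
  else ENNReal.ofReal (2 / 3)

/-- The measure on `[0,1]` with density `ρᵏ` with respect to Lebesgue measure. -/
noncomputable def muk (k : ℕ) : Measure ℝ :=
  (volume.restrict (Set.Icc (0 : ℝ) 1)).withDensity (rhok k)

/-!
On `[0, 1/2)` the map `φ_k` sends each dyadic interval `[2^j, 2^(j+1))` affinely onto `[0, 1)`
with slope `2^(-j)`; summing a geometric series, it pushes Lebesgue measure `λ` on `(0, 2^z)`,
`z ≤ -1`, forward to `2^z λ|[0,1]`. On `[1/2, 1]` it is affine onto `[0, 2^(-k)]` with slope
`2^(1-k)`. Since `μ_k = (2/3) λ|[0,1] + (2^k/3) λ|[0,2^(-k))`, its push-forward is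
`(2/3) (2^(k-1) λ|[0,2^(-k)) + λ|[0,1] / 2) + (2^k/3) 2^(-k) λ|[0,1] = μ_k`.
-/

open Set
open scoped Function ENNReal

theorem Int.log_eq_iff_mem_Ico {R : Type*} [Field R] [LinearOrder R] [IsStrictOrderedRing R]
    [FloorRing R] {b : ℕ} (hb : 1 < b) {r : R} (hr : 0 < r) {n : ℤ} :
    Int.log b r = n ↔ r ∈ Ico ((b : R) ^ n) ((b : R) ^ (n + 1)) := by
  rw [mem_Ico, Int.zpow_le_iff_le_log hb hr, Int.lt_zpow_iff_log_lt hb hr]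
  omega

theorem Int.measurable_log (b : ℕ) : Measurable (Int.log b : ℝ → ℤ) := by
  have h : (Int.log b : ℝ → ℤ) = fun x => ⌊Real.logb b (max x 0)⌋ := by
    funext x
    rcases le_total 0 x with hx | hx
    · rw [max_eq_left hx, Real.floor_logb_natCast hx]
    · rw [max_eq_right hx, Int.log_of_right_le_zero b hx, Real.logb_zero, Int.floor_zero]
  rw [h]
  exact (Real.measurable_log.comp (measurable_id.max measurable_const)).div_const _ |>.floor

theorem ENNReal.ofReal_zpow_of_pos {r : ℝ} (hr : 0 < r) (z : ℤ) :
    ENNReal.ofReal (r ^ z) = ENNReal.ofReal r ^ z := by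
  obtain ⟨n, rfl | rfl⟩ := z.eq_nat_or_neg
  · simp [ENNReal.ofReal_pow hr.le]
  · rw [zpow_neg, ENNReal.zpow_neg, ENNReal.ofReal_inv_of_pos (by positivity)]
    simp [ENNReal.ofReal_pow hr.le]

theorem ENNReal.ofReal_two_zpow (z : ℤ) : ENNReal.ofReal ((2 : ℝ) ^ z) = 2 ^ z := by
  rw [ENNReal.ofReal_zpow_of_pos two_pos, ENNReal.ofReal_ofNat]

theorem ENNReal.two_zpow_sub_one_mul_two (z : ℤ) : (2 : ℝ≥0∞) ^ (z - 1) * 2 = 2 ^ z := by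
  conv_rhs => rw [← sub_add_cancel z 1]
  rw [ENNReal.zpow_add two_ne_zero ofNat_ne_top, zpow_one]

theorem ENNReal.two_pow_mul_two_zpow_neg (k : ℕ) : (2 : ℝ≥0∞) ^ k * 2 ^ (-(k : ℤ)) = 1 := by
  rw [ENNReal.zpow_neg, zpow_natCast,
    ENNReal.mul_inv_cancel (pow_ne_zero _ two_ne_zero) (pow_ne_top ofNat_ne_top)]

theorem ENNReal.tsum_two_zpow_sub (z : ℤ) : ∑' n : ℕ, (2 : ℝ≥0∞) ^ (z - 1 - n) = 2 ^ z := by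
  have h (n : ℕ) : (2 : ℝ≥0∞) ^ (z - 1 - n) = 2 ^ (z - 1) * 2⁻¹ ^ n := by
    rw [sub_eq_add_neg (z - 1), ENNReal.zpow_add two_ne_zero ofNat_ne_top, ENNReal.zpow_neg,
      zpow_natCast, ENNReal.inv_pow]
  simp_rw [h]
  rw [ENNReal.tsum_mul_left, ENNReal.tsum_geometric, ENNReal.one_sub_inv_two, inv_inv,
    ENNReal.two_zpow_sub_one_mul_two]

theorem MeasureTheory.Measure.sum_smul_const {α ι : Type*} [MeasurableSpace α] (c : ι → ℝ≥0∞)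
    (μ : Measure α) :
    Measure.sum (fun n => c n • μ) = (∑' n, c n) • μ := by
  ext s hs
  simp [Measure.sum_apply _ hs, ENNReal.tsum_mul_right]

theorem map_affine_volume_restrict_preimage {c : ℝ} (hc : 0 < c) (b : ℝ) {s : Set ℝ}
    (hs : MeasurableSet s) :
    (volume.restrict ((fun x => c * (x - b)) ⁻¹' s)).map (fun x => c * (x - b)) =
      ENNReal.ofReal c⁻¹ • volume.restrict s := by
  have hmap : volume.map (fun x : ℝ => c * (x - b)) = ENNReal.ofReal c⁻¹ • volume := by
    rw [show (fun x : ℝ => c * (x - b)) = (c * ·) ∘ (· - b) from rfl,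
      ← Measure.map_map (measurable_const_mul c) (measurable_sub_const b),
      map_sub_right_eq_self, Real.map_volume_mul_left hc.ne', abs_of_pos (inv_pos.2 hc)]
  rw [← Measure.restrict_map (by fun_prop) hs, hmap, Measure.restrict_smul]

theorem iUnion_Ico_two_zpow (z : ℤ) :
    ⋃ n : ℕ, Ico ((2 : ℝ) ^ (z - 1 - n)) (2 ^ (z - 1 - n + 1)) = Ioo 0 (2 ^ z) := by
  ext x
  simp only [mem_iUnion, mem_Ioo]
  constructor
  · rintro ⟨n, hx⟩
    exact ⟨(zpow_pos two_pos _).trans_le hx.1,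
      hx.2.trans_le (zpow_le_zpow_right₀ one_le_two (by omega))⟩
  · rintro ⟨hx0, hxz⟩
    have hlog : Int.log 2 x < z :=
      (Int.lt_zpow_iff_log_lt one_lt_two hx0).1 (by exact_mod_cast hxz)
    refine ⟨(z - 1 - Int.log 2 x).toNat, ?_⟩
    rw [show z - 1 - ((z - 1 - Int.log 2 x).toNat : ℤ) = Int.log 2 x by omega]
    exact_mod_cast (Int.log_eq_iff_mem_Ico one_lt_two hx0).1 rfl

theorem pairwise_disjoint_Ico_two_zpow (z : ℤ) :
    Pairwise (Disjoint on fun n : ℕ => Ico ((2 : ℝ) ^ (z - 1 - n)) (2 ^ (z - 1 - n + 1))) := by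
  have hmono : Monotone fun j : ℤ => (2 : ℝ) ^ j := zpow_right_mono₀ one_le_two
  have hinj : Function.Injective fun n : ℕ => z - 1 - n := fun m n h => by simpa using h
  simpa [Function.onFun, Order.succ_eq_add_one] using
    hmono.pairwise_disjoint_on_Ico_succ.comp_of_injective hinj

theorem measurable_phi (k : ℕ) : Measurable (phi k) := by
  unfold phi
  have hlog := Int.measurable_log 2
  refine Measurable.ite (measurableSet_singleton 0) measurable_const
    (Measurable.ite measurableSet_Ici (by fun_prop) ?_)
  fun_prop

theorem phi_eq_of_mem_Ico_two_zpow (k : ℕ) {j : ℤ} (hj : j ≤ -2) {x : ℝ}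
    (hx : x ∈ Ico ((2 : ℝ) ^ j) (2 ^ (j + 1))) : phi k x = 2 ^ (-j) * (x - 2 ^ j) := by
  have hx0 : 0 < x := (zpow_pos two_pos j).trans_le hx.1
  have hx_half : x < 1 / 2 :=
    calc x < 2 ^ (j + 1) := hx.2
      _ ≤ 2 ^ (-1 : ℤ) := zpow_le_zpow_right₀ one_le_two (by omega)
      _ = 1 / 2 := by norm_num
  have hlog : Int.log 2 x = j := (Int.log_eq_iff_mem_Ico one_lt_two hx0).2 (by exact_mod_cast hx)
  rw [phi, if_neg hx0.ne', if_neg hx_half.not_ge, hlog]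

theorem phi_eq_of_mem_Icc_half_one (k : ℕ) {x : ℝ} (hx : x ∈ Icc (1 / 2 : ℝ) 1) :
    phi k x = 2 ^ ((1 : ℤ) - k) * (x - 1 / 2) := by
  rw [phi, if_neg (by linarith [hx.1]), if_pos hx.1]

theorem preimage_affine_Ico_zero_one (j : ℤ) :
    (fun x : ℝ => 2 ^ (-j) * (x - 2 ^ j)) ⁻¹' Ico 0 1 = Ico ((2 : ℝ) ^ j) (2 ^ (j + 1)) := by
  rw [show (fun x : ℝ => 2 ^ (-j) * (x - 2 ^ j)) = (2 ^ (-j) * ·) ∘ (· - 2 ^ j) from rfl,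
    preimage_comp, preimage_const_mul_Ico₀ _ _ (zpow_pos two_pos _), preimage_sub_const_Ico,
    zpow_add_one₀ two_ne_zero, zpow_neg]
  congr 1 <;> field_simp <;> ring

theorem preimage_affine_Icc_zero_two_zpow (k : ℕ) :
    (fun x : ℝ => 2 ^ ((1 : ℤ) - k) * (x - 1 / 2)) ⁻¹' Icc 0 (2 ^ (-(k : ℤ))) =
      Icc (1 / 2) 1 := by
  rw [show (fun x : ℝ => 2 ^ ((1 : ℤ) - k) * (x - 1 / 2)) = (2 ^ ((1 : ℤ) - k) * ·) ∘ (· - 1 / 2)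
      from rfl, preimage_comp, preimage_const_mul_Icc₀ _ _ (zpow_pos two_pos _),
    preimage_sub_const_Icc, zpow_sub₀ two_ne_zero, zpow_neg]
  congr 1 <;> field_simp <;> norm_num

theorem map_phi_restrict_Ico_two_zpow (k : ℕ) {j : ℤ} (hj : j ≤ -2) :
    (volume.restrict (Ico ((2 : ℝ) ^ j) (2 ^ (j + 1)))).map (phi k) =
      (2 : ℝ≥0∞) ^ j • volume.restrict (Ico 0 1) := by
  have hphi : phi k =ᵐ[volume.restrict (Ico ((2 : ℝ) ^ j) (2 ^ (j + 1)))]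
      fun x => 2 ^ (-j) * (x - 2 ^ j) :=
    ae_restrict_of_forall_mem measurableSet_Ico fun x hx => phi_eq_of_mem_Ico_two_zpow k hj hx
  rw [Measure.map_congr hphi, ← preimage_affine_Ico_zero_one,
    map_affine_volume_restrict_preimage (zpow_pos two_pos _) _ measurableSet_Ico,
    ← zpow_neg, neg_neg, ENNReal.ofReal_two_zpow]

theorem map_phi_restrict_Icc_half_one (k : ℕ) :
    (volume.restrict (Icc (1 / 2 : ℝ) 1)).map (phi k) =
      (2 : ℝ≥0∞) ^ ((k : ℤ) - 1) • volume.restrict (Ico 0 (2 ^ (-(k : ℤ)))) := by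
  have hphi : phi k =ᵐ[volume.restrict (Icc (1 / 2 : ℝ) 1)]
      fun x => 2 ^ ((1 : ℤ) - k) * (x - 1 / 2) :=
    ae_restrict_of_forall_mem measurableSet_Icc fun x hx => phi_eq_of_mem_Icc_half_one k hx
  rw [Measure.map_congr hphi, ← preimage_affine_Icc_zero_two_zpow,
    map_affine_volume_restrict_preimage (zpow_pos two_pos _) _ measurableSet_Icc,
    ← zpow_neg, neg_sub, ENNReal.ofReal_two_zpow, Measure.restrict_congr_set Ico_ae_eq_Icc]

theorem map_phi_restrict_Ioo_zero_two_zpow (k : ℕ) {z : ℤ} (hz : z ≤ -1) :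
    (volume.restrict (Ioo (0 : ℝ) (2 ^ z))).map (phi k) =
      (2 : ℝ≥0∞) ^ z • volume.restrict (Icc 0 1) := by
  rw [← Measure.restrict_congr_set Ico_ae_eq_Icc, ← iUnion_Ico_two_zpow,
    Measure.restrict_iUnion (pairwise_disjoint_Ico_two_zpow z) fun _ => measurableSet_Ico,
    Measure.map_sum (measurable_phi k).aemeasurable]
  have hpiece (n : ℕ) := map_phi_restrict_Ico_two_zpow k (j := z - 1 - n) (by omega)
  simp_rw [hpiece, Measure.sum_smul_const, ENNReal.tsum_two_zpow_sub]

theorem map_phi_restrict_Icc_zero_one (k : ℕ) :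
    (volume.restrict (Icc (0 : ℝ) 1)).map (phi k) =
      (2 : ℝ≥0∞) ^ ((k : ℤ) - 1) • volume.restrict (Ico 0 (2 ^ (-(k : ℤ)))) +
        (2 : ℝ≥0∞) ^ (-1 : ℤ) • volume.restrict (Icc 0 1) := by
  have hdisj : Disjoint (Ioo (0 : ℝ) (2 ^ (-1 : ℤ))) (Icc (1 / 2) 1) := by
    rw [zpow_neg_one, ← one_div]
    exact disjoint_left.2 fun x hx hx' => hx.2.not_ge hx'.1
  have hsplit : volume.restrict (Icc (0 : ℝ) 1) =
      volume.restrict (Ioo 0 (2 ^ (-1 : ℤ))) + volume.restrict (Icc (1 / 2) 1) := by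
    rw [← Measure.restrict_union hdisj measurableSet_Icc, zpow_neg_one, ← one_div,
      Ioo_union_Icc_eq_Ioc (by norm_num) (by norm_num), Measure.restrict_congr_set Ioc_ae_eq_Icc]
  conv_lhs => rw [hsplit]
  rw [Measure.map_add _ _ (measurable_phi k), map_phi_restrict_Ioo_zero_two_zpow k le_rfl,
    map_phi_restrict_Icc_half_one, add_comm]

theorem map_phi_restrict_Ico_zero_two_zpow (k : ℕ) (hk : 1 ≤ k) :
    (volume.restrict (Ico (0 : ℝ) (2 ^ (-(k : ℤ))))).map (phi k) =
      (2 : ℝ≥0∞) ^ (-(k : ℤ)) • volume.restrict (Icc 0 1) := by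
  rw [Measure.restrict_congr_set Ioo_ae_eq_Ico.symm,
    map_phi_restrict_Ioo_zero_two_zpow k (by omega)]

theorem rhok_eq (k : ℕ) :
    rhok k =
      (3 : ℝ≥0∞)⁻¹ • ((fun _ => 2) + (Iio ((2 : ℝ) ^ (-(k : ℤ)))).indicator fun _ => 2 ^ k) := by
  funext x
  by_cases hx : x < 2 ^ (-(k : ℤ))
  · rw [rhok, if_pos hx, Pi.smul_apply, Pi.add_apply, indicator_of_mem (show x ∈ Iio _ from hx),
      ENNReal.ofReal_div_of_pos three_pos, ENNReal.ofReal_add (by positivity) zero_le_two,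
      ENNReal.ofReal_pow zero_le_two]
    simp [ENNReal.div_eq_inv_mul, add_comm]
  · rw [rhok, if_neg hx, Pi.smul_apply, Pi.add_apply,
      indicator_of_notMem (show x ∉ Iio _ from hx), ENNReal.ofReal_div_of_pos three_pos]
    simp [ENNReal.div_eq_inv_mul]

theorem muk_eq (k : ℕ) :
    muk k = (3 : ℝ≥0∞)⁻¹ • ((2 : ℝ≥0∞) • volume.restrict (Icc (0 : ℝ) 1) +
      (2 : ℝ≥0∞) ^ k • volume.restrict (Ico 0 (2 ^ (-(k : ℤ))))) := by
  have hIio : Iio ((2 : ℝ) ^ (-(k : ℤ))) ∩ Icc 0 1 = Ico 0 (2 ^ (-(k : ℤ))) := by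
    have hle : (2 : ℝ) ^ (-(k : ℤ)) ≤ 1 := zpow_le_one_of_nonpos₀ one_le_two (by omega)
    ext x
    simp only [mem_inter_iff, mem_Iio, mem_Icc, mem_Ico]
    constructor
    · rintro ⟨hx, hx0, -⟩
      exact ⟨hx0, hx⟩
    · rintro ⟨hx0, hx⟩
      exact ⟨hx, hx0, by linarith⟩
  rw [muk, rhok_eq, withDensity_smul' _ _ (by simp), withDensity_add_left measurable_const,
    withDensity_const, withDensity_indicator measurableSet_Iio, withDensity_const,
    Measure.restrict_restrict measurableSet_Iio, hIio]

theorem map_phi_muk (k : ℕ) (hk : 1 ≤ k) : (muk k).map (phi k) = muk k := by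
  have hhalf : (2 : ℝ≥0∞) * 2 ^ (-1 : ℤ) = 1 := by
    rw [zpow_neg_one, ENNReal.mul_inv_cancel two_ne_zero ENNReal.ofNat_ne_top]
  have htop : (2 : ℝ≥0∞) * 2 ^ ((k : ℤ) - 1) = 2 ^ k := by
    rw [mul_comm, ENNReal.two_zpow_sub_one_mul_two, zpow_natCast]
  rw [muk_eq, Measure.map_smul]
  congr 1
  rw [Measure.map_add _ _ (measurable_phi k), Measure.map_smul,
    Measure.map_smul, map_phi_restrict_Icc_zero_one, map_phi_restrict_Ico_zero_two_zpow k hk,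
    smul_add, smul_smul, smul_smul, smul_smul, hhalf, htop, ENNReal.two_pow_mul_two_zpow_neg,
    one_smul, two_smul]
  abel

theorem isProbabilityMeasure_muk (k : ℕ) : IsProbabilityMeasure (muk k) := by
  constructor
  rw [muk_eq]
  simp only [Measure.smul_apply, Measure.add_apply, Measure.restrict_apply_univ, Real.volume_Icc,
    Real.volume_Ico, smul_eq_mul, sub_zero, ENNReal.ofReal_one, ENNReal.ofReal_two_zpow,
    ENNReal.two_pow_mul_two_zpow_neg]
  rw [mul_one, two_add_one_eq_three, ENNReal.inv_mul_cancel three_ne_zero ENNReal.ofNat_ne_top]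

/-- (Proposition 2) For any integer `k ≥ 2`, the measure with density
`ρᵏ(x) = (2^k + 2)/3` on `[0, 2^(-k))` and `2/3` on `[2^(-k), 1]`
is an invariant probability measure for `φ_k`. -/
theorem stmt_2 (k : ℕ) (hk : 2 ≤ k) :
    Measure.map (phi k) (muk k) = muk k ∧ IsProbabilityMeasure (muk k) :=
  ⟨map_phi_muk k (by omega), isProbabilityMeasure_muk k⟩
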